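/- Let n = p_1 p_2 ⋯ p_k be a product of k ≥ 2 distinct primes and let d be a divisor of n with 1 < d < n having exactly i prime factors (so 1 ≤ i ≤ k − 1). Then the degree of the vertex ⟨d⟩ in the essential ideal graph E_{Z_n} of Z_n = Z/nZ equals 2^{k−i} − 1. -/

import Mathlib

/-- An ideal `I` of a commutative ring `R` is essential if it is nonzero and has
nonzero intersection with every nonzero ideal of `R`. -/
def IsEssentialIdeal {R : Type*} [CommRing R] (I : Ideal R) : Prop :=
  I ≠ ⊥ ∧ ∀ J : Ideal R, J ≠ ⊥ → I ⊓ J ≠ ⊥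

/-- The essential ideal graph of a commutative ring `R`: vertices are the nonzero
proper ideals of `R`, and distinct vertices `I`, `J` are adjacent iff `I + J` is
an essential ideal of `R`. -/
def essentialIdealGraph (R : Type*) [CommRing R] :
    SimpleGraph {I : Ideal R // I ≠ ⊥ ∧ I ≠ ⊤} where
  Adj I J := I ≠ J ∧ IsEssentialIdeal (I.1 ⊔ J.1)
  symm := by
    constructor
    rintro I J ⟨hne, h⟩
    exact ⟨hne.symm, by rwa [sup_comm]⟩
  loopless := ⟨fun I h => h.1 rfl⟩

/-- The annihilating ideal graph of a commutative ring `R`: vertices are the nonzero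
annihilating ideals of `R`, with distinct vertices `I`, `J` adjacent iff `I * J = 0`. -/
def annihilatingIdealGraph (R : Type*) [CommRing R] :
    SimpleGraph {I : Ideal R // I ≠ ⊥ ∧ ∃ J : Ideal R, J ≠ ⊥ ∧ I * J = ⊥} where
  Adj I J := I ≠ J ∧ I.1 * J.1 = ⊥
  symm := by
    constructor
    rintro I J ⟨hne, h⟩
    exact ⟨hne.symm, by rwa [mul_comm]⟩
  loopless := ⟨fun I h => h.1 rfl⟩

/-- A set `W` of vertices of a graph `G` is a resolving set if any two distinct
vertices are distinguished by their distance to some element of `W`. -/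
def IsResolvingSet {V : Type*} (G : SimpleGraph V) (W : Set V) : Prop :=
  ∀ u v : V, u ≠ v → ∃ w ∈ W, G.dist u w ≠ G.dist v w

/-- The metric dimension of a graph: the least cardinality of a (finite) resolving set. -/
noncomputable def metricDim {V : Type*} (G : SimpleGraph V) : ℕ :=
  sInf {k : ℕ | ∃ W : Set V, W.Finite ∧ IsResolvingSet G W ∧ W.ncard = k}

/-- The degree of a vertex: the number of vertices adjacent to it. -/
noncomputable def gdeg {V : Type*} (G : SimpleGraph V) (v : V) : ℕ :=
  Nat.card {u : V // G.Adj v u}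

/-- The first Zagreb index: the sum of the squares of the vertex degrees. -/
noncomputable def zagreb1 {V : Type*} (G : SimpleGraph V) : ℕ :=
  ∑ᶠ v : V, (gdeg G v) ^ 2

/-- The second Zagreb index: the sum over edges `{u,v}` of `deg u * deg v`. -/
noncomputable def zagreb2 {V : Type*} (G : SimpleGraph V) : ℕ :=
  ∑ᶠ e ∈ G.edgeSet, Sym2.lift ⟨fun u v => gdeg G u * gdeg G v, fun u v => mul_comm _ _⟩ e

/-!
For squarefree `n`, `ZMod n` is reduced and Artinian, hence semisimple, so every ideal has a
complement; an essential ideal can only be complemented by `⊥` and is therefore `⊤`. Thus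
`⟨d⟩` and `⟨e⟩` are adjacent iff `⟨d⟩ ⊔ ⟨e⟩ = ⟨gcd d e⟩ = ⊤`, i.e. iff `d` and `e` are coprime.
The divisors `e ≠ 1` of `n` coprime to `d` are exactly the divisors `e ≠ 1` of `n / d`, and `n / d`
is squarefree with `k - i` prime factors, so it has `2 ^ (k - i)` divisors.
-/

open Ideal Finset

namespace Nat

theorem card_divisors_of_squarefree {m : ℕ} (hm : Squarefree m) :
    #m.divisors = 2 ^ #m.primeFactors := by
  rw [card_divisors hm.ne_zero, prod_congr rfl fun p hp => by
    rw [factorization_eq_one_of_squarefree hm (prime_of_mem_primeFactors hp)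
      (dvd_of_mem_primeFactors hp)], prod_const]

theorem squarefree_prod_of_injective {ι : Type*} {s : Finset ι} {p : ι → ℕ}
    (hp : ∀ j, (p j).Prime) (hinj : Function.Injective p) : Squarefree (∏ j ∈ s, p j) :=
  squarefree_prod_of_pairwise_isCoprime
    (fun a _ b _ hab =>
      coprime_iff_isRelPrime.mp ((coprime_primes (hp a) (hp b)).mpr (hinj.ne hab)))
    fun j _ => (hp j).prime.squarefree

theorem card_primeFactors_prod_of_injective {ι : Type*} [Fintype ι] {p : ι → ℕ}
    (hp : ∀ j, (p j).Prime) (hinj : Function.Injective p) :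
    #(∏ j, p j).primeFactors = Fintype.card ι := by
  have himage : ∏ j, p j = ∏ q ∈ univ.image p, q :=
    (prod_image (f := id) fun a _ b _ h => hinj h).symm
  rw [himage, primeFactors_prod (by simpa using hp),
    Finset.card_image_of_injective _ hinj, Finset.card_univ]

theorem dvd_div_iff_dvd_and_coprime {n d e : ℕ} (hn : Squarefree n) (hd : d ∣ n) :
    e ∣ n / d ↔ e ∣ n ∧ d.Coprime e := by
  have hdn : d * (n / d) = n := Nat.mul_div_cancel' hd
  refine ⟨fun he => ⟨he.trans (div_dvd_of_dvd hd), ?_⟩, fun ⟨he, hde⟩ => ?_⟩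
  · exact (coprime_of_squarefree_mul (by rwa [hdn])).coprime_dvd_right he
  · exact hde.symm.dvd_of_dvd_mul_left (by rwa [hdn])

end Nat

section Semisimple

variable {R : Type*} [CommRing R] [IsSemisimpleRing R]

theorem IsEssentialIdeal.eq_top {I : Ideal R} (hI : IsEssentialIdeal I) : I = ⊤ := by
  obtain ⟨J, hIJ⟩ := exists_isCompl I
  have hJ : J = ⊥ := by_contra fun hJ => hI.2 J hJ hIJ.inf_eq_bot
  simpa [hJ] using hIJ.sup_eq_top

theorem isEssentialIdeal_iff_eq_top {I : Ideal R} (hI : I ≠ ⊥) : IsEssentialIdeal I ↔ I = ⊤ :=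
  ⟨IsEssentialIdeal.eq_top, by rintro rfl; exact ⟨hI, fun J hJ => by rwa [top_inf_eq]⟩⟩

theorem essentialIdealGraph_adj_iff {u v : {I : Ideal R // I ≠ ⊥ ∧ I ≠ ⊤}} :
    (essentialIdealGraph R).Adj u v ↔ u.1 ⊔ v.1 = ⊤ := by
  change u ≠ v ∧ IsEssentialIdeal (u.1 ⊔ v.1) ↔ _
  rw [isEssentialIdeal_iff_eq_top (ne_bot_of_le_ne_bot u.2.1 le_sup_left)]
  refine ⟨And.right, fun h => ⟨?_, h⟩⟩
  rintro rfl
  exact u.2.2 (by simpa using h)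

theorem gdeg_essentialIdealGraph_eq_ncard (v : {I : Ideal R // I ≠ ⊥ ∧ I ≠ ⊤}) :
    gdeg (essentialIdealGraph R) v = {I : Ideal R | (I ≠ ⊥ ∧ I ≠ ⊤) ∧ v.1 ⊔ I = ⊤}.ncard := by
  rw [gdeg, ← Nat.card_coe_set_eq]
  exact Nat.card_congr <| (Equiv.subtypeEquivRight fun u => essentialIdealGraph_adj_iff).trans
    (Equiv.subtypeSubtypeEquivSubtypeInter _ (fun I => v.1 ⊔ I = ⊤))

end Semisimple

theorem Ideal.span_natCast_sup_span_natCast {R : Type*} [CommRing R] (a b : ℕ) :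
    span {(a : R)} ⊔ span {(b : R)} = span {((a.gcd b : ℕ) : R)} := by
  have := congrArg (map (Int.castRingHom R)) (span_gcd (a : ℤ) (b : ℤ))
  rw [map_span, map_span, Set.image_insert_eq, Set.image_singleton, Set.image_singleton,
    span_insert] at this
  simpa [← Int.coe_gcd] using this.symm

namespace ZMod

variable {n : ℕ}

theorem span_natCast_eq_top_iff (c : ℕ) : span {(c : ZMod n)} = ⊤ ↔ c.Coprime n := by
  rw [span_singleton_eq_top, isUnit_iff_coprime]

theorem span_natCast_eq_bot_iff {a : ℕ} (ha : a ∣ n) : span {(a : ZMod n)} = ⊥ ↔ a = n := by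
  rw [span_singleton_eq_bot, natCast_eq_zero_iff]
  exact ⟨(Nat.dvd_antisymm ha ·), (· ▸ dvd_rfl)⟩

theorem dvd_of_natCast_dvd_natCast {a b : ℕ} (hb : b ∣ n) (h : (b : ZMod n) ∣ a) : b ∣ a := by
  simpa [natCast_self, zero_dvd_iff, natCast_eq_zero_iff] using map_dvd (castHom hb (ZMod b)) h

theorem span_natCast_injOn : Set.InjOn (fun a : ℕ => span {(a : ZMod n)}) {a | a ∣ n} := by
  intro a ha b hb hab
  simp only [le_antisymm_iff, span_singleton_le_span_singleton] at hab
  exact Nat.dvd_antisymm (dvd_of_natCast_dvd_natCast ha hab.2)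
    (dvd_of_natCast_dvd_natCast hb hab.1)

theorem exists_dvd_and_eq_span_natCast [NeZero n] (I : Ideal (ZMod n)) :
    ∃ a, a ∣ n ∧ I = span {(a : ZMod n)} := by
  have : IsPrincipalIdealRing (ZMod n) :=
    .of_surjective (Int.castRingHom (ZMod n)) intCast_surjective
  obtain ⟨x, rfl⟩ := (IsPrincipalIdealRing.principal I).principal
  refine ⟨x.val.gcd n, Nat.gcd_dvd_right _ _, ?_⟩
  rw [← span_natCast_sup_span_natCast, natCast_self, span_singleton_zero, sup_bot_eq,
    natCast_zmod_val]

theorem span_natCast_proper_and_sup_eq_top_iff {d e : ℕ} (hn : Squarefree n) (hd : d ∣ n)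
    (hd1 : d ≠ 1) (he : e ∣ n) :
    (span {(e : ZMod n)} ≠ ⊥ ∧ span {(e : ZMod n)} ≠ ⊤) ∧
        span {(d : ZMod n)} ⊔ span {(e : ZMod n)} = ⊤ ↔
      e ∈ (n / d).divisors.erase 1 := by
  have hcop {c : ℕ} (hc : c ∣ n) : c.Coprime n ↔ c = 1 :=
    ⟨(·.eq_one_of_dvd hc), (· ▸ Nat.coprime_one_left n)⟩
  have hgcd : d.gcd e ∣ n := (Nat.gcd_dvd_left d e).trans hd
  rw [ne_eq, ne_eq, span_natCast_eq_bot_iff he, span_natCast_eq_top_iff, hcop he,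
    span_natCast_sup_span_natCast, span_natCast_eq_top_iff, hcop hgcd, mem_erase,
    Nat.mem_divisors, Nat.dvd_div_iff_dvd_and_coprime hn hd, Nat.div_ne_zero_iff_of_dvd hd]
  refine ⟨fun ⟨⟨_, he1⟩, hde⟩ => ⟨he1, ⟨he, hde⟩, hn.ne_zero, ne_zero_of_dvd_ne_zero hn.ne_zero hd⟩,
    fun ⟨he1, ⟨_, hde⟩, _⟩ => ⟨⟨?_, he1⟩, hde⟩⟩
  rintro rfl
  exact hd1 ((hcop hd).mp hde)

end ZMod

theorem gdeg_essentialIdealGraph_zmod {n d : ℕ} (hn : Squarefree n) (hd : d ∣ n)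
    (v : {I : Ideal (ZMod n) // I ≠ ⊥ ∧ I ≠ ⊤}) (hv : v.1 = span {(d : ZMod n)}) :
    gdeg (essentialIdealGraph (ZMod n)) v = 2 ^ #(n / d).primeFactors - 1 := by
  have : NeZero n := ⟨hn.ne_zero⟩
  have : Fact (Squarefree n) := ⟨hn⟩
  have : IsSemisimpleRing (ZMod n) := IsArtinianRing.isSemisimpleRing_of_isReduced _
  have hd1 : d ≠ 1 := by
    rintro rfl
    exact v.2.2 (by rw [hv, ZMod.span_natCast_eq_top_iff]; exact Nat.coprime_one_left n)
  have hsub : ↑((n / d).divisors.erase 1) ⊆ {a | a ∣ n} := fun e he =>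
    (Nat.dvd_of_mem_divisors (mem_of_mem_erase he)).trans (Nat.div_dvd_of_dvd hd)
  have hneighbors : {I | (I ≠ ⊥ ∧ I ≠ ⊤) ∧ v.1 ⊔ I = ⊤} =
      (fun e : ℕ => span {(e : ZMod n)}) '' ↑((n / d).divisors.erase 1) := by
    ext I
    obtain ⟨e, he, rfl⟩ := ZMod.exists_dvd_and_eq_span_natCast I
    rw [Set.mem_ofPred_eq, hv, ZMod.span_natCast_proper_and_sup_eq_top_iff hn hd hd1 he,
      ZMod.span_natCast_injOn.mem_image_iff hsub he, mem_coe]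
  have hnd0 : n / d ≠ 0 :=
    (Nat.div_ne_zero_iff_of_dvd hd).mpr ⟨hn.ne_zero, ne_zero_of_dvd_ne_zero hn.ne_zero hd⟩
  rw [gdeg_essentialIdealGraph_eq_ncard, hneighbors,
    (ZMod.span_natCast_injOn.mono hsub).ncard_image, Set.ncard_coe_finset,
    card_erase_of_mem (Nat.one_mem_divisors.mpr hnd0),
    Nat.card_divisors_of_squarefree (hn.squarefree_of_dvd (Nat.div_dvd_of_dvd hd))]

theorem stmt_17_general (k : ℕ) (p : Fin k → ℕ)
    (hp : ∀ j, (p j).Prime) (hinj : Function.Injective p)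
    (n : ℕ) (hn : n = ∏ j, p j)
    (d i : ℕ) (hd : d ∣ n)
    (hi : d.primeFactors.card = i)
    (v : {I : Ideal (ZMod n) // I ≠ ⊥ ∧ I ≠ ⊤})
    (hv : v.1 = Ideal.span {(d : ZMod n)}) :
    gdeg (essentialIdealGraph (ZMod n)) v = 2 ^ (k - i) - 1 := by
  have hsq : Squarefree n := by rw [hn]; exact Nat.squarefree_prod_of_injective hp hinj
  have hk : #n.primeFactors = k := by
    rw [hn, Nat.card_primeFactors_prod_of_injective hp hinj, Fintype.card_fin]
  rw [gdeg_essentialIdealGraph_zmod hsq hd v hv, ← Nat.gcd_eq_right hd,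
    Nat.primeFactors_div_gcd hsq (ne_zero_of_dvd_ne_zero hsq.ne_zero hd),
    card_sdiff_of_subset (Nat.primeFactors_mono hd hsq.ne_zero), hk, hi]

/-- For `n` a product of `k ≥ 2` distinct primes and `d` a nontrivial
proper divisor of `n` with exactly `i` prime factors, the degree of the vertex `⟨d⟩` in
the essential ideal graph of `ℤ/nℤ` equals `2^{k-i} - 1`. -/
theorem stmt_17 (k : ℕ) (hk : 2 ≤ k) (p : Fin k → ℕ)
    (hp : ∀ j, (p j).Prime) (hinj : Function.Injective p)
    (n : ℕ) (hn : n = ∏ j, p j)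
    (d i : ℕ) (hd : d ∣ n) (h1d : 1 < d) (hdn : d < n)
    (hi : d.primeFactors.card = i)
    (v : {I : Ideal (ZMod n) // I ≠ ⊥ ∧ I ≠ ⊤})
    (hv : v.1 = Ideal.span {(d : ZMod n)}) :
    gdeg (essentialIdealGraph (ZMod n)) v = 2 ^ (k - i) - 1 :=
  stmt_17_general k p hp hinj n hn d i hd hi v hv
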